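/- Let d, d_x, d_y ∈ ℕ, let Θ ⊂ ℝ^d be a nonempty compact set, and let A : Θ → ℝ^{d_y×d_x} and B : Θ → ℝ^{d_y×d_y} be continuous mappings such that, for every θ ∈ Θ, B(θ) is symmetric positive definite and A(θ)ᵀA(θ) is positive definite (i.e. A(θ) has full column rank). Then there exist constants C₁, C₂ ∈ (0, ∞) such that for all θ ∈ Θ, x ∈ ℝ^{d_x} and y ∈ ℝ^{d_y}: φ_{d_y}(y; A(θ)x, B(θ)) ≤ C₁ · e^{C₁‖y‖²} · exp( −(‖x‖ − C₂‖y‖)² / C₁ ). -/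

import Mathlib

open Matrix

/-- The Euclidean norm on `ℝ^n`. -/
noncomputable def euclNorm {n : ℕ} (x : Fin n → ℝ) : ℝ := Real.sqrt (∑ i, (x i) ^ 2)

/-- The density of the `n`-dimensional Gaussian distribution with mean `m` and
(symmetric positive definite) covariance matrix `V`, with respect to Lebesgue measure. -/
noncomputable def gaussDensity {n : ℕ} (m : Fin n → ℝ) (V : Matrix (Fin n) (Fin n) ℝ)
    (x : Fin n → ℝ) : ℝ :=
  ((2 * Real.pi) ^ n * V.det) ^ (-(1 : ℝ) / 2) *
    Real.exp (-((x - m) ⬝ᵥ (V⁻¹ *ᵥ (x - m))) / 2)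

/-!
On a compact parameter set, continuity and positive definiteness give uniform constants:
`det B(θ) ≥ δ`, `zᵀ B(θ)⁻¹ z ≥ λ ‖z‖²` and `‖A(θ) x‖ ≥ √μ ‖x‖` (minimise the quadratic forms
over `Θ × sphere`). Then, with `a = ‖A(θ) x‖`, the exponent satisfies
`zᵀ B⁻¹ z ≥ λ ‖y - A x‖² ≥ λ (a - ‖y‖)² ≥ λ ((√μ ‖x‖ - ‖y‖)² - ‖y‖²)`,
which is the claimed bound with `C₂ = 1 / √μ` after enlarging all constants to a common `C₁`.
-/

open Real

lemma euclNorm_nonneg {n : ℕ} (x : Fin n → ℝ) : 0 ≤ euclNorm x := sqrt_nonneg _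

lemma euclNorm_sq_eq_dotProduct {n : ℕ} (x : Fin n → ℝ) : euclNorm x ^ 2 = x ⬝ᵥ x := by
  rw [euclNorm, sq_sqrt (by positivity)]
  simp only [dotProduct, sq]

lemma euclNorm_eq_norm_toLp {n : ℕ} (x : Fin n → ℝ) : euclNorm x = ‖WithLp.toLp 2 x‖ := by
  simp [euclNorm, EuclideanSpace.norm_eq, sq_abs]

lemma abs_euclNorm_sub_euclNorm_le {n : ℕ} (x y : Fin n → ℝ) :
    |euclNorm x - euclNorm y| ≤ euclNorm (x - y) := by
  simpa only [euclNorm_eq_norm_toLp, WithLp.toLp_sub] using abs_norm_sub_norm_le _ _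

lemma euclNorm_mulVec_sq {m n : ℕ} (A : Matrix (Fin m) (Fin n) ℝ) (x : Fin n → ℝ) :
    euclNorm (A *ᵥ x) ^ 2 = x ⬝ᵥ ((Aᵀ * A) *ᵥ x) := by
  rw [euclNorm_sq_eq_dotProduct, ← mulVec_mulVec, dotProduct_mulVec x, vecMul_transpose]

theorem IsCompact.exists_pos_mul_dotProduct_le {X ι : Type*} [TopologicalSpace X] [Fintype ι]
    {K : Set X} (hK : IsCompact K) {M : X → Matrix ι ι ℝ} (hM : ContinuousOn M K)
    (hpd : ∀ θ ∈ K, (M θ).PosDef) :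
    ∃ c, 0 < c ∧ ∀ θ ∈ K, ∀ z : ι → ℝ, c * (z ⬝ᵥ z) ≤ z ⬝ᵥ (M θ *ᵥ z) := by
  set S := Metric.sphere (0 : EuclideanSpace ℝ ι) 1
  let F : X × EuclideanSpace ℝ ι → ℝ := fun p => p.2.ofLp ⬝ᵥ (M p.1 *ᵥ p.2.ofLp)
  have hF : ContinuousOn F (K ×ˢ S) := by
    have hofLp : Continuous fun p : X × EuclideanSpace ℝ ι => p.2.ofLp :=
      (PiLp.continuous_ofLp 2 _).comp continuous_snd
    have hM' : ContinuousOn (fun p : X × EuclideanSpace ℝ ι => M p.1) (K ×ˢ S) :=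
      hM.comp continuousOn_fst fun _ hp => hp.1
    exact (continuous_snd.dotProduct (continuous_fst.matrix_mulVec continuous_snd))
      |>.comp_continuousOn (hM'.prodMk hofLp.continuousOn)
  have hFpos : ∀ p ∈ K ×ˢ S, 0 < F p := fun p hp =>
    (hpd p.1 hp.1).dotProduct_mulVec_pos (by simpa using Metric.ne_of_mem_sphere hp.2 one_ne_zero)
  obtain ⟨c, hc, hcF⟩ := (hK.prod (isCompact_sphere 0 1)).exists_forall_le' hF hFpos
  refine ⟨c, hc, fun θ hθ z => ?_⟩
  rcases eq_or_ne z 0 with rfl | hz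
  · simp
  set r := ‖WithLp.toLp 2 z‖
  have hr : 0 < r := norm_pos_iff.2 (by simpa using hz)
  have hzz : z ⬝ᵥ z = r ^ 2 := by
    rw [EuclideanSpace.real_norm_sq_eq]
    simp only [dotProduct, sq]
  have hcz := hcF (θ, r⁻¹ • WithLp.toLp 2 z) ⟨hθ, by simp [norm_smul, hr.ne', r]⟩
  simp only [F, WithLp.ofLp_smul, mulVec_smul, dotProduct_smul, smul_dotProduct,
    smul_eq_mul] at hcz
  rw [hzz]
  field_simp at hcz
  linarith

theorem ContinuousOn.matrix_inv {X ι R : Type*} [TopologicalSpace X] [Fintype ι] [DecidableEq ι]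
    [Field R] [TopologicalSpace R] [IsTopologicalRing R] [ContinuousInv₀ R]
    {K : Set X} {M : X → Matrix ι ι R} (hM : ContinuousOn M K) (hdet : ∀ θ ∈ K, (M θ).det ≠ 0) :
    ContinuousOn (fun θ => (M θ)⁻¹) K := fun θ hθ =>
  (continuousAt_matrix_inv _ (Ring.inverse_eq_inv' (G₀ := R) ▸ continuousAt_inv₀ (hdet θ hθ)))
    |>.comp_continuousWithinAt (hM θ hθ)

lemma sq_sub_sub_sq_le {s a b : ℝ} (hs : 0 ≤ s) (hsa : s ≤ a) (hb : 0 ≤ b) :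
    (s - b) ^ 2 - b ^ 2 ≤ (a - b) ^ 2 := by
  rcases le_total b s with hbs | hsb
  · nlinarith
  · nlinarith

lemma sqrt_mul_euclNorm_le {m n : ℕ} {A : Matrix (Fin m) (Fin n) ℝ} {μ : ℝ} (hμ : 0 ≤ μ)
    {x : Fin n → ℝ} (h : μ * (x ⬝ᵥ x) ≤ x ⬝ᵥ ((Aᵀ * A) *ᵥ x)) :
    √μ * euclNorm x ≤ euclNorm (A *ᵥ x) := by
  rw [← euclNorm_sq_eq_dotProduct, ← euclNorm_mulVec_sq] at h
  rw [← pow_le_pow_iff_left₀ (by positivity [euclNorm_nonneg x]) (euclNorm_nonneg _) two_ne_zero,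
    mul_pow, sq_sqrt hμ]
  exact h

theorem gaussDensity_mulVec_le {n k : ℕ} (A : Matrix (Fin n) (Fin k) ℝ)
    {B : Matrix (Fin n) (Fin n) ℝ}
    {δ l μ : ℝ} (hδ : 0 < δ) (hdet : δ ≤ B.det) (hl : 0 ≤ l) (hμ : 0 ≤ μ)
    (hB : ∀ z, l * (z ⬝ᵥ z) ≤ z ⬝ᵥ (B⁻¹ *ᵥ z)) (hA : ∀ x, μ * (x ⬝ᵥ x) ≤ x ⬝ᵥ ((Aᵀ * A) *ᵥ x))
    (x : Fin k → ℝ) (y : Fin n → ℝ) :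
    gaussDensity (A *ᵥ x) B y ≤ ((2 * π) ^ n * δ) ^ (-(1 : ℝ) / 2) *
      exp (l / 2 * euclNorm y ^ 2) * exp (-(l / 2) * (√μ * euclNorm x - euclNorm y) ^ 2) := by
  have hz : (√μ * euclNorm x - euclNorm y) ^ 2 - euclNorm y ^ 2 ≤ euclNorm (y - A *ᵥ x) ^ 2 := by
    refine (sq_sub_sub_sq_le (by positivity [euclNorm_nonneg x]) (sqrt_mul_euclNorm_le hμ (hA x))
      (euclNorm_nonneg y)).trans (sq_le_sq.2 ?_)
    rw [abs_sub_comm, abs_of_nonneg (euclNorm_nonneg _)]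
    exact abs_euclNorm_sub_euclNorm_le _ _
  have hq : l * ((√μ * euclNorm x - euclNorm y) ^ 2 - euclNorm y ^ 2) ≤
      (y - A *ᵥ x) ⬝ᵥ (B⁻¹ *ᵥ (y - A *ᵥ x)) := by
    refine (mul_le_mul_of_nonneg_left hz hl).trans ?_
    rw [euclNorm_sq_eq_dotProduct]
    exact hB _
  rw [gaussDensity, mul_assoc, ← exp_add]
  exact mul_le_mul (rpow_le_rpow_of_nonpos (by positivity) (by gcongr) (by norm_num))
    (exp_le_exp.2 (by linarith)) (exp_pos _).le (by positivity)

theorem stmt11_general (d dx dy : ℕ) (Θ : Set (Fin d → ℝ)) (hcp : IsCompact Θ)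
    (A : (Fin d → ℝ) → Matrix (Fin dy) (Fin dx) ℝ)
    (B : (Fin d → ℝ) → Matrix (Fin dy) (Fin dy) ℝ)
    (hA : ∀ i j, ContinuousOn (fun θ => A θ i j) Θ)
    (hB : ∀ i j, ContinuousOn (fun θ => B θ i j) Θ)
    (hBpd : ∀ θ ∈ Θ, (B θ).PosDef)
    (hApd : ∀ θ ∈ Θ, ((A θ)ᵀ * A θ).PosDef) :
    ∃ C₁ : ℝ, 0 < C₁ ∧ ∃ C₂ : ℝ, 0 < C₂ ∧
      ∀ θ ∈ Θ, ∀ (x : Fin dx → ℝ) (y : Fin dy → ℝ),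
        gaussDensity (A θ *ᵥ x) (B θ) y ≤
          C₁ * Real.exp (C₁ * euclNorm y ^ 2) *
            Real.exp (-(euclNorm x - C₂ * euclNorm y) ^ 2 / C₁) := by
  have hAc : ContinuousOn A Θ := continuousOn_pi.2 fun i => continuousOn_pi.2 (hA i)
  have hBc : ContinuousOn B Θ := continuousOn_pi.2 fun i => continuousOn_pi.2 (hB i)
  obtain ⟨δ, hδ, hdet⟩ := hcp.exists_forall_le' (continuous_id.matrix_det.comp_continuousOn hBc)
    fun θ hθ => (hBpd θ hθ).det_pos
  obtain ⟨l, hl, hBinv⟩ := hcp.exists_pos_mul_dotProduct_le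
    (hBc.matrix_inv fun θ hθ => (hBpd θ hθ).det_pos.ne') fun θ hθ => (hBpd θ hθ).inv
  obtain ⟨μ, hμ, hAtA⟩ := hcp.exists_pos_mul_dotProduct_le
    ((continuous_id.matrix_transpose.matrix_mul continuous_id).comp_continuousOn hAc) hApd
  set c := ((2 * π) ^ dy * δ) ^ (-(1 : ℝ) / 2)
  refine ⟨max c (max (l / 2) (2 / (l * μ))), by positivity, (√μ)⁻¹, by positivity,
    fun θ hθ x y => ?_⟩
  have hexp : -(l / 2) * (√μ * euclNorm x - euclNorm y) ^ 2 =
      -(euclNorm x - (√μ)⁻¹ * euclNorm y) ^ 2 / (2 / (l * μ)) := by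
    set s := √μ
    rw [show μ = s ^ 2 from (sq_sqrt hμ.le).symm]
    have hs : 0 < s := sqrt_pos.2 hμ
    field_simp
  calc gaussDensity (A θ *ᵥ x) (B θ) y
      ≤ c * exp (l / 2 * euclNorm y ^ 2) * exp (-(l / 2) * (√μ * euclNorm x - euclNorm y) ^ 2) :=
        gaussDensity_mulVec_le (A θ) hδ (hdet θ hθ) hl.le hμ.le (hBinv θ hθ) (hAtA θ hθ) x y
    _ ≤ _ := by
      rw [hexp, neg_div, neg_div]
      gcongr
      · exact le_max_left _ _
      · exact (le_max_left _ _).trans (le_max_right _ _)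
      · exact (le_max_right _ _).trans (le_max_right _ _)

theorem stmt11 (d dx dy : ℕ) (Θ : Set (Fin d → ℝ)) (hne : Θ.Nonempty) (hcp : IsCompact Θ)
    (A : (Fin d → ℝ) → Matrix (Fin dy) (Fin dx) ℝ)
    (B : (Fin d → ℝ) → Matrix (Fin dy) (Fin dy) ℝ)
    (hA : ∀ i j, ContinuousOn (fun θ => A θ i j) Θ)
    (hB : ∀ i j, ContinuousOn (fun θ => B θ i j) Θ)
    (hBpd : ∀ θ ∈ Θ, (B θ).PosDef)
    (hApd : ∀ θ ∈ Θ, ((A θ)ᵀ * A θ).PosDef) :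
    ∃ C₁ : ℝ, 0 < C₁ ∧ ∃ C₂ : ℝ, 0 < C₂ ∧
      ∀ θ ∈ Θ, ∀ (x : Fin dx → ℝ) (y : Fin dy → ℝ),
        gaussDensity (A θ *ᵥ x) (B θ) y ≤
          C₁ * Real.exp (C₁ * euclNorm y ^ 2) *
            Real.exp (-(euclNorm x - C₂ * euclNorm y) ^ 2 / C₁) :=
  stmt11_general d dx dy Θ hcp A B hA hB hBpd hApd
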